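/- arXiv:2602.14103 — 2 statements merged into one kernel-verified Lean document; each statement's English description precedes it below -/
import Mathlib

section
/- The function f maps every s-adic cylinder onto a binary cylinder: for any base c₁…c_m, f(Δ^s_{c₁…c_m}) = Δ^2_{β₁…β_m}, where β₁…β_m are the digits produced from c₁…c_m by the defining recursion. -/
open Set Filter

/-- Value of an `s`-adic code `α`: `∑ αₙ / sⁿ⁺¹`. -/
noncomputable def sval (s : ℕ) (α : ℕ → ℕ) : ℝ := ∑' n, (α n : ℝ) / (s : ℝ) ^ (n + 1)

/-- `α` is a sequence of digits in `{0, …, s−1}`. -/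
def isDigits (s : ℕ) (α : ℕ → ℕ) : Prop := ∀ n, α n < s

/-- The `s`-adic cylinder of rank `m` with base `c₀ … c_{m−1}`. -/
def cylinder (s m : ℕ) (c : ℕ → ℕ) : Set ℝ :=
  {x | ∃ α : ℕ → ℕ, isDigits s α ∧ (∀ i < m, α i = c i) ∧ x = sval s α}

/-- The sequence of output binary digits `βₙ`. -/
def betaSeq (A1 : Finset ℕ) (α : ℕ → ℕ) : ℕ → ℕ
  | 0 => if α 0 ∈ A1 then 1 else 0
  | n + 1 => if α (n + 1) = α n then betaSeq A1 α n else 1 - betaSeq A1 α n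

lemma betaSeq_congr (A1 : Finset ℕ) {α α' : ℕ → ℕ} :
    ∀ {n : ℕ}, (∀ i ≤ n, α i = α' i) → betaSeq A1 α n = betaSeq A1 α' n := by
  intro n
  induction n with
  | zero => intro h; simp only [betaSeq, h 0 le_rfl]
  | succ n ih =>
    intro h
    have h1 := h (n + 1) le_rfl
    have h2 := h n (Nat.le_succ n)
    have h3 := ih fun i hi => h i (hi.trans (Nat.le_succ n))
    simp only [betaSeq, h1, h2, h3]

lemma betaSeq_le_one (A1 : Finset ℕ) (α : ℕ → ℕ) : ∀ n, betaSeq A1 α n ≤ 1 := by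
  intro n
  induction n with
  | zero => simp only [betaSeq]; split <;> simp
  | succ n ih => simp only [betaSeq]; split <;> omega

/-- Extension of the prefix `c` of length `m` to a full digit sequence whose
beta-sequence is `β`. -/
def extSeq (m : ℕ) (c β : ℕ → ℕ) (a0 a1 : ℕ) : ℕ → ℕ
  | 0 => if 0 < m then c 0 else if β 0 = 1 then a1 else a0
  | n + 1 =>
    if n + 1 < m then c (n + 1)
    else if β (n + 1) = β n then extSeq m c β a0 a1 n
    else if extSeq m c β a0 a1 n = 0 then 1 else 0

lemma extSeq_prefix (m : ℕ) (c β : ℕ → ℕ) (a0 a1 : ℕ) :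
    ∀ i < m, extSeq m c β a0 a1 i = c i := by
  intro i hi
  cases i with
  | zero => simp [extSeq, hi]
  | succ n => simp [extSeq, hi]

lemma extSeq_lt {s : ℕ} (hs : 2 < s) (m : ℕ) (c β : ℕ → ℕ) (a0 a1 : ℕ)
    (hc : ∀ i < m, c i < s) (ha0 : a0 < s) (ha1 : a1 < s) :
    ∀ n, extSeq m c β a0 a1 n < s := by
  intro n
  induction n with
  | zero =>
    simp only [extSeq]
    split
    · exact hc 0 (by assumption)
    · split <;> assumption
  | succ n ih =>
    simp only [extSeq]
    split
    · exact hc (n + 1) (by assumption)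
    · split
      · exact ih
      · split <;> omega

lemma betaSeq_extSeq (A0 A1 : Finset ℕ) (hdisj : Disjoint A0 A1)
    (m : ℕ) (c β : ℕ → ℕ) (a0 a1 : ℕ) (ha0 : a0 ∈ A0) (ha1 : a1 ∈ A1)
    (hβ : isDigits 2 β) (hpre : ∀ i < m, betaSeq A1 c i = β i) :
    ∀ n, betaSeq A1 (extSeq m c β a0 a1) n = β n := by
  intro n
  induction n with
  | zero =>
    by_cases hm : 0 < m
    · have : betaSeq A1 (extSeq m c β a0 a1) 0 = betaSeq A1 c 0 :=
        betaSeq_congr A1 fun i hi => extSeq_prefix m c β a0 a1 i (by omega)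
      rw [this, hpre 0 hm]
    · have hz : extSeq m c β a0 a1 0 = if β 0 = 1 then a1 else a0 := by
        simp [extSeq, hm]
      have hβ0 := hβ 0
      have : β 0 = 0 ∨ β 0 = 1 := by omega
      rcases this with h | h
      · have ha0' : a0 ∉ A1 := fun h' => (Finset.disjoint_left.mp hdisj ha0) h'
        simp [betaSeq, hz, h, ha0']
      · simp [betaSeq, hz, h, ha1]
  | succ n ih =>
    by_cases hm : n + 1 < m
    · have : betaSeq A1 (extSeq m c β a0 a1) (n + 1) = betaSeq A1 c (n + 1) :=
        betaSeq_congr A1 fun i hi => extSeq_prefix m c β a0 a1 i (by omega)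
      rw [this, hpre (n + 1) hm]
    · by_cases hb : β (n + 1) = β n
      · have hα : extSeq m c β a0 a1 (n + 1) = extSeq m c β a0 a1 n := by
          simp [extSeq, hm, hb]
        simp [betaSeq, hα, ih, hb]
      · have hα : extSeq m c β a0 a1 (n + 1) =
            if extSeq m c β a0 a1 n = 0 then 1 else 0 := by
          simp [extSeq, hm, hb]
        have hne : extSeq m c β a0 a1 (n + 1) ≠ extSeq m c β a0 a1 n := by
          rw [hα]; split <;> omega
        simp only [betaSeq, if_neg hne]
        have := hβ (n + 1); have := hβ n
        omega

/-- `f` maps every `s`-adic cylinder onto a binary cylinder: the image of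
`Δˢ_{c₁…c_m}` is the binary cylinder of rank `m` with base `β₁…β_m` obtained from `c`
by the defining recursion. -/
theorem f_image_cylinder (s : ℕ) (hs : 2 < s) (A0 A1 : Finset ℕ)
    (hA : A0 ∪ A1 = Finset.range s) (hdisj : Disjoint A0 A1)
    (h0 : A0.Nonempty) (h1 : A1.Nonempty) (f : ℝ → ℝ)
    (hf : ∀ α : ℕ → ℕ, isDigits s α → f (sval s α) = sval 2 (betaSeq A1 α))
    (m : ℕ) (c : ℕ → ℕ) (hc : ∀ i < m, c i < s) :
    f '' cylinder s m c = cylinder 2 m (betaSeq A1 c) := by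
  obtain ⟨a0, ha0⟩ := h0
  obtain ⟨a1, ha1⟩ := h1
  have ha0s : a0 < s := by
    have : a0 ∈ Finset.range s := hA ▸ Finset.mem_union_left _ ha0
    simpa using this
  have ha1s : a1 < s := by
    have : a1 ∈ Finset.range s := hA ▸ Finset.mem_union_right _ ha1
    simpa using this
  ext y
  constructor
  · rintro ⟨x, ⟨α, hα, hαc, rfl⟩, rfl⟩
    refine ⟨betaSeq A1 α, fun n => Nat.lt_succ_of_le (betaSeq_le_one A1 α n),
      fun i hi => betaSeq_congr A1 fun j hj => hαc j (by omega), hf α hα⟩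
  · rintro ⟨β, hβ, hβc, rfl⟩
    set α := extSeq m c β a0 a1 with hαdef
    have hαdig : isDigits s α := extSeq_lt hs m c β a0 a1 hc ha0s ha1s
    refine ⟨sval s α, ⟨α, hαdig, extSeq_prefix m c β a0 a1, rfl⟩, ?_⟩
    rw [hf α hαdig]
    have : betaSeq A1 α = β :=
      funext (betaSeq_extSeq A0 A1 hdisj m c β a0 a1 ha0 ha1 hβ
        fun i hi => (hβc i hi).symm)
    rw [this]
end

section
/- If instead the recursion β_{n+1} = βₙ when α_{n+1} ≠ αₙ and β_{n+1} = 1−βₙ when α_{n+1} = αₙ is used (with the same rule for β₁), then the resulting map is not well defined: there exists an s-adic rational whose two s-adic representations are assigned different values. -/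
open Set Filter

/-- The flipped recursion: `β_{n+1} = βₙ` iff `α_{n+1} ≠ αₙ`. -/
def betaSeq' (A1 : Finset ℕ) (α : ℕ → ℕ) : ℕ → ℕ
  | 0 => if α 0 ∈ A1 then 1 else 0
  | n + 1 => if α (n + 1) ≠ α n then betaSeq' A1 α n else 1 - betaSeq' A1 α n

/-! Under the flipped rule `β₁ = β₀` whenever `α₁ ≠ α₀`. Both codes `(c, 0, 0, …)` and
`(c - 1, s - 1, s - 1, …)` of `c / s` have `α₁ ≠ α₀`, and `c`, `c - 1` lie in different classes,
so their images start with the binary digits `00` and `11`: one value is at most `1/4`, the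
other at least `3/4`. -/

open Finset

def digitThenConst (a d : ℕ) : ℕ → ℕ := fun n => if n = 0 then a else d

@[simp] theorem digitThenConst_zero (a d : ℕ) : digitThenConst a d 0 = a := rfl

@[simp] theorem digitThenConst_succ (a d n : ℕ) : digitThenConst a d (n + 1) = d := rfl

theorem isDigits_digitThenConst {s a d : ℕ} (ha : a < s) (hd : d < s) :
    isDigits s (digitThenConst a d) := by
  rintro (_ | _) <;> assumption

section sAdic

variable {s : ℕ} {α : ℕ → ℕ}

theorem sval_eq_ofDigits (hα : isDigits s α) :
    sval s α = Real.ofDigits (fun n => (⟨α n, hα n⟩ : Fin s)) := by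
  simp only [sval, Real.ofDigits, Real.ofDigitsTerm, div_eq_mul_inv]

theorem sval_eq_sum_add_ofDigits (hα : isDigits s α) (n : ℕ) :
    sval s α = ∑ i ∈ range n, (α i : ℝ) / (s : ℝ) ^ (i + 1) +
      ((s : ℝ) ^ n)⁻¹ * Real.ofDigits (fun i => (⟨α (i + n), hα (i + n)⟩ : Fin s)) := by
  rw [sval_eq_ofDigits hα, Real.ofDigits_eq_sum_add_ofDigits _ n]
  simp only [Real.ofDigitsTerm, div_eq_mul_inv]

theorem sum_le_sval (hα : isDigits s α) (n : ℕ) :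
    ∑ i ∈ range n, (α i : ℝ) / (s : ℝ) ^ (i + 1) ≤ sval s α := by
  rw [sval_eq_sum_add_ofDigits hα n]
  exact le_add_of_nonneg_right (mul_nonneg (by positivity) (Real.ofDigits_nonneg _))

theorem sval_le_sum_add (hα : isDigits s α) (n : ℕ) :
    sval s α ≤ ∑ i ∈ range n, (α i : ℝ) / (s : ℝ) ^ (i + 1) + ((s : ℝ) ^ n)⁻¹ := by
  rw [sval_eq_sum_add_ofDigits hα n]
  gcongr
  exact mul_le_of_le_one_right (by positivity) (Real.ofDigits_le_one _)

theorem sval_digitThenConst {a d : ℕ} (ha : a < s) (hd : d < s) :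
    sval s (digitThenConst a d) = (a + Real.ofDigits (fun _ => (⟨d, hd⟩ : Fin s))) / s := by
  rw [sval_eq_sum_add_ofDigits (isDigits_digitThenConst ha hd) 1]
  simp only [sum_range_one, digitThenConst_zero, digitThenConst_succ, zero_add, pow_one]
  ring

theorem sval_digitThenConst_zero {c : ℕ} (hc : c < s) :
    sval s (digitThenConst c 0) = c / s := by
  rw [sval_digitThenConst hc (by omega)]
  simp [Real.ofDigits, Real.ofDigitsTerm]

theorem sval_digitThenConst_sub_one {c : ℕ} (hc₁ : 1 ≤ c) (hc : c < s) :
    sval s (digitThenConst (c - 1) (s - 1)) = c / s := by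
  rw [sval_digitThenConst (by omega) (by omega), Real.ofDigits_const_last_eq_one' (by omega),
    Nat.cast_sub hc₁]
  ring

end sAdic

theorem betaSeq'_le_one (A1 : Finset ℕ) (α : ℕ → ℕ) (n : ℕ) : betaSeq' A1 α n ≤ 1 := by
  induction n <;> simp only [betaSeq'] <;> split <;> omega

theorem betaSeq'_one_of_ne {A1 : Finset ℕ} {α : ℕ → ℕ} (h : α 1 ≠ α 0) :
    betaSeq' A1 α 1 = betaSeq' A1 α 0 := by
  simp [betaSeq', h]

theorem sval_two_lt_of_prefix {β γ : ℕ → ℕ} (hβ : isDigits 2 β) (hγ : isDigits 2 γ)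
    (hβ₀ : β 0 = 0) (hβ₁ : β 1 = 0) (hγ₀ : γ 0 = 1) (hγ₁ : γ 1 = 1) :
    sval 2 β < sval 2 γ := by
  have hβle := sval_le_sum_add hβ 2
  have hγge := sum_le_sval hγ 2
  simp only [sum_range_succ, sum_range_zero, hβ₀, hβ₁, hγ₀, hγ₁] at hβle hγge
  norm_num at hβle hγge
  linarith

theorem sval_betaSeq'_lt {A1 : Finset ℕ} {α α' : ℕ → ℕ} (h : α 1 ≠ α 0) (h' : α' 1 ≠ α' 0)
    (hα : α 0 ∉ A1) (hα' : α' 0 ∈ A1) :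
    sval 2 (betaSeq' A1 α) < sval 2 (betaSeq' A1 α') := by
  have hdigits (α) : isDigits 2 (betaSeq' A1 α) := fun n =>
    Nat.lt_succ_of_le (betaSeq'_le_one A1 α n)
  apply sval_two_lt_of_prefix (hdigits α) (hdigits α')
  · simp [betaSeq', hα]
  · rw [betaSeq'_one_of_ne h]; simp [betaSeq', hα]
  · simp [betaSeq', hα']
  · rw [betaSeq'_one_of_ne h']; simp [betaSeq', hα']

theorem flipped_not_well_defined_general (s : ℕ) (A0 A1 : Finset ℕ)
    (hdisj : Disjoint A0 A1)
    (hc : ∃ c : ℕ, 1 ≤ c ∧ c < s ∧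
      ((c ∈ A1 ∧ c - 1 ∈ A0) ∨ (c ∈ A0 ∧ c - 1 ∈ A1))) :
    ∃ α α' : ℕ → ℕ, isDigits s α ∧ isDigits s α' ∧ sval s α = sval s α' ∧
      sval 2 (betaSeq' A1 α) ≠ sval 2 (betaSeq' A1 α') := by
  obtain ⟨c, hc₁, hcs, hcase⟩ := hc
  refine ⟨digitThenConst c 0, digitThenConst (c - 1) (s - 1),
    isDigits_digitThenConst hcs (by omega), isDigits_digitThenConst (by omega) (by omega),
    (sval_digitThenConst_zero hcs).trans (sval_digitThenConst_sub_one hc₁ hcs).symm, ?_⟩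
  have h : digitThenConst c 0 1 ≠ digitThenConst c 0 0 := by
    change 0 ≠ c; omega
  have h' : digitThenConst (c - 1) (s - 1) 1 ≠ digitThenConst (c - 1) (s - 1) 0 := by
    change s - 1 ≠ c - 1; omega
  rcases hcase with ⟨hc, hc'⟩ | ⟨hc, hc'⟩
  · exact (sval_betaSeq'_lt h' h (disjoint_left.mp hdisj hc') hc).ne'
  · exact (sval_betaSeq'_lt h h' (disjoint_left.mp hdisj hc) hc').ne

/-- with the flipped recursion the map is not well defined: some `s`-adic
rational has two `s`-adic codes that are assigned different values. -/
theorem flipped_not_well_defined (s : ℕ) (hs : 2 < s) (A0 A1 : Finset ℕ)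
    (hA : A0 ∪ A1 = Finset.range s) (hdisj : Disjoint A0 A1)
    (h0 : A0.Nonempty) (h1 : A1.Nonempty)
    (hc : ∃ c : ℕ, 1 ≤ c ∧ c < s ∧
      ((c ∈ A1 ∧ c - 1 ∈ A0) ∨ (c ∈ A0 ∧ c - 1 ∈ A1))) :
    ∃ α α' : ℕ → ℕ, isDigits s α ∧ isDigits s α' ∧ sval s α = sval s α' ∧
      sval 2 (betaSeq' A1 α) ≠ sval 2 (betaSeq' A1 α') :=
  flipped_not_well_defined_general s A0 A1 hdisj hc
end
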